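/- arXiv:1202.1919 — 8 statements merged into one kernel-verified Lean document; each statement's English description precedes it below -/
import Mathlib

section
/- If γ(t) = (x(t), y(t)) is a T-periodic solution of the system ẋ = y, ẏ = -x + (1 - x²)(y + y³) whose orbit does not meet the hyperbola {xy + 1 = 0}, then ∫₀ᵀ div(X)(γ(t)) dt = ∫₀ᵀ (2x(t)² + 1) dt > 0; in particular every periodic orbit is repelling and the system has no limit cycles. -/
open intervalIntegral
open MeasureTheory (volume)

/-!
Along the orbit the divergence `(1 - x²)(1 + 3y²)` of the field splits as `3K + (2x² + 1) - 3xy`,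
where `K` is the cofactor of the invariant hyperbola `F = xy + 1`, i.e. `Ḟ = K F`. Since the orbit
avoids `F = 0`, `K = d/dt log |F|` along it, and `xy = x ẋ = d/dt (x² / 2)`; both integrate to
zero over a period.
-/

section Prod

variable {𝕜 F G : Type*} [NontriviallyNormedField 𝕜]
  [NormedAddCommGroup F] [NormedSpace 𝕜 F] [NormedAddCommGroup G] [NormedSpace 𝕜 G]
  {f : 𝕜 → F × G} {f' : F × G} {x : 𝕜}

theorem HasDerivAt.fst (h : HasDerivAt f f' x) : HasDerivAt (fun x => (f x).1) f'.1 x :=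
  HasFDerivAt.fst h

theorem HasDerivAt.snd (h : HasDerivAt f f' x) : HasDerivAt (fun x => (f x).2) f'.2 x :=
  HasFDerivAt.snd h

end Prod

theorem integral_eq_zero_of_hasDerivAt_of_eq {E : Type*} [NormedAddCommGroup E]
    [NormedSpace ℝ E] [CompleteSpace E] {f f' : ℝ → E} {a b : ℝ}
    (hf : ∀ t ∈ Set.uIcc a b, HasDerivAt f (f' t) t) (hint : IntervalIntegrable f' volume a b)
    (hab : f a = f b) : ∫ t in a..b, f' t = 0 := by
  rw [integral_eq_sub_of_hasDerivAt hf hint, hab, sub_self]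

theorem integral_eq_zero_of_hasDerivAt_eq_mul_self {g k : ℝ → ℝ} {a b : ℝ}
    (hg : ∀ t ∈ Set.uIcc a b, HasDerivAt g (k t * g t) t)
    (hg0 : ∀ t ∈ Set.uIcc a b, g t ≠ 0)
    (hk : IntervalIntegrable k volume a b) (hab : g a = g b) :
    ∫ t in a..b, k t = 0 := by
  refine integral_eq_zero_of_hasDerivAt_of_eq (f := fun t => Real.log (g t)) (fun t ht => ?_) hk
    (by simp only [hab])
  exact ((hg t ht).log (hg0 t ht)).congr_deriv (mul_div_cancel_right₀ _ (hg0 t ht))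

theorem integral_mul_eq_zero_of_hasDerivAt {x y : ℝ → ℝ} {a b : ℝ}
    (hx : ∀ t ∈ Set.uIcc a b, HasDerivAt x (y t) t)
    (hint : IntervalIntegrable (fun t => x t * y t) volume a b) (hab : x a = x b) :
    ∫ t in a..b, x t * y t = 0 := by
  refine integral_eq_zero_of_hasDerivAt_of_eq (f := fun t => x t ^ 2 / 2) (fun t ht => ?_) hint
    (by simp only [hab])
  refine (((hx t ht).pow 2).div_const 2).congr_deriv ?_
  ring

def vectorField (p : ℝ × ℝ) : ℝ × ℝ := (p.2, -p.1 + (1 - p.1 ^ 2) * (p.2 + p.2 ^ 3))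

/-- The cofactor of the invariant curve `xy + 1 = 0` of `vectorField`. -/
def cofactor (p : ℝ × ℝ) : ℝ := p.2 ^ 2 - p.1 ^ 2 + p.1 * p.2 - p.1 ^ 2 * p.2 ^ 2

theorem divergence_eq_cofactor (p : ℝ × ℝ) :
    (1 - p.1 ^ 2) * (1 + 3 * p.2 ^ 2) = 3 * cofactor p + (2 * p.1 ^ 2 + 1) - 3 * (p.1 * p.2) := by
  unfold cofactor
  ring

theorem hasDerivAt_invariant_curve {γ : ℝ → ℝ × ℝ} {t : ℝ}
    (hode : HasDerivAt γ (vectorField (γ t)) t) :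
    HasDerivAt (fun t => (γ t).1 * (γ t).2 + 1)
      (cofactor (γ t) * ((γ t).1 * (γ t).2 + 1)) t := by
  refine ((hode.fst.mul hode.snd).add_const 1).congr_deriv ?_
  simp only [vectorField, cofactor]
  ring

theorem integral_cofactor_eq_zero {T : ℝ} {γ : ℝ → ℝ × ℝ}
    (hode : ∀ t, HasDerivAt γ (vectorField (γ t)) t) (hper : γ T = γ 0)
    (havoid : ∀ t, (γ t).1 * (γ t).2 + 1 ≠ 0) :
    ∫ t in (0:ℝ)..T, cofactor (γ t) = 0 := by
  have hγ : Continuous γ := Differentiable.continuous fun t => (hode t).differentiableAt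
  have hK : Continuous fun t => cofactor (γ t) := by unfold cofactor; fun_prop
  exact integral_eq_zero_of_hasDerivAt_eq_mul_self (fun t _ => hasDerivAt_invariant_curve (hode t))
    (fun t _ => havoid t) (hK.intervalIntegrable 0 T) (by rw [hper])

theorem integral_fst_mul_snd_eq_zero {T : ℝ} {γ : ℝ → ℝ × ℝ}
    (hode : ∀ t, HasDerivAt γ (vectorField (γ t)) t) (hper : γ T = γ 0) :
    ∫ t in (0:ℝ)..T, (γ t).1 * (γ t).2 = 0 := by
  have hγ : Continuous γ := Differentiable.continuous fun t => (hode t).differentiableAt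
  exact integral_mul_eq_zero_of_hasDerivAt (fun t _ => (hode t).fst)
    ((by fun_prop : Continuous fun t => (γ t).1 * (γ t).2).intervalIntegrable 0 T) (by rw [hper])

theorem integral_divergence_eq {T : ℝ} {γ : ℝ → ℝ × ℝ}
    (hode : ∀ t, HasDerivAt γ (vectorField (γ t)) t) (hper : γ T = γ 0)
    (havoid : ∀ t, (γ t).1 * (γ t).2 + 1 ≠ 0) :
    (∫ t in (0:ℝ)..T, (1 - (γ t).1 ^ 2) * (1 + 3 * (γ t).2 ^ 2))
      = ∫ t in (0:ℝ)..T, (2 * (γ t).1 ^ 2 + 1) := by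
  have hγ : Continuous γ := Differentiable.continuous fun t => (hode t).differentiableAt
  have hK : Continuous fun t => 3 * cofactor (γ t) := by unfold cofactor; fun_prop
  have hQ : Continuous fun t => 2 * (γ t).1 ^ 2 + 1 := by fun_prop
  have hxy : Continuous fun t => 3 * ((γ t).1 * (γ t).2) := by fun_prop
  simp only [divergence_eq_cofactor]
  rw [integral_sub (f := fun t => 3 * cofactor (γ t) + (2 * (γ t).1 ^ 2 + 1))
      ((hK.add hQ).intervalIntegrable 0 T) (hxy.intervalIntegrable 0 T),
    integral_add (hK.intervalIntegrable 0 T) (hQ.intervalIntegrable 0 T), integral_const_mul,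
    integral_const_mul, integral_cofactor_eq_zero hode hper havoid,
    integral_fst_mul_snd_eq_zero hode hper]
  ring

/-- If γ is a T-periodic solution of ẋ = y, ẏ = -x + (1 - x²)(y + y³) whose
orbit avoids the hyperbola xy + 1 = 0, then
∫₀ᵀ div X (γ(t)) dt = ∫₀ᵀ (2x(t)² + 1) dt > 0. -/
theorem periodic_orbit_repelling (T : ℝ) (hT : 0 < T) (γ : ℝ → ℝ × ℝ)
    (hode : ∀ t : ℝ, HasDerivAt γ
      ((γ t).2, -(γ t).1 + (1 - (γ t).1 ^ 2) * ((γ t).2 + (γ t).2 ^ 3)) t)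
    (hper : ∀ t : ℝ, γ (t + T) = γ t)
    (havoid : ∀ t : ℝ, (γ t).1 * (γ t).2 + 1 ≠ 0) :
    (∫ t in (0:ℝ)..T, (1 - (γ t).1 ^ 2) * (1 + 3 * (γ t).2 ^ 2))
      = ∫ t in (0:ℝ)..T, (2 * (γ t).1 ^ 2 + 1) ∧
    0 < ∫ t in (0:ℝ)..T, (2 * (γ t).1 ^ 2 + 1) := by
  have hperiod : γ T = γ 0 := by simpa using hper 0
  have hγ : Continuous γ := Differentiable.continuous fun t => (hode t).differentiableAt
  refine ⟨integral_divergence_eq hode hperiod havoid, ?_⟩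
  exact intervalIntegral_pos_of_pos_on
    ((by fun_prop : Continuous fun t => 2 * (γ t).1 ^ 2 + 1).intervalIntegrable 0 T)
    (fun t _ => by positivity) hT
end

section
/- For every b with 0 < b < 2/√3, the polynomial M_b(x) = 4x⁴ + b²(3b² - 4)(x² - b²) is strictly positive for all real x. -/
/-! Completing the square in `x²`, with `c = b²(3b² - 4)`,
`16 M_b(x) = (8x² + c)² + b⁴(4 - 3b²)(3b² + 12)`,
and the second summand is positive exactly when `b ≠ 0` and `3b² < 4`. -/

lemma three_mul_sq_lt_four_of_lt_two_div_sqrt_three {b : ℝ} (hb0 : 0 ≤ b)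
    (hb : b < 2 / √3) : 3 * b ^ 2 < 4 := by
  have hb' : b * √3 < 2 := (lt_div_iff₀ (by positivity)).mp hb
  calc 3 * b ^ 2 = (b * √3) ^ 2 := by rw [mul_pow, Real.sq_sqrt (by norm_num)]; ring
    _ < 2 ^ 2 := pow_lt_pow_left₀ hb' (by positivity) two_ne_zero
    _ = 4 := by norm_num

lemma sixteen_mul_quartic_eq (b x : ℝ) :
    16 * (4 * x ^ 4 + b ^ 2 * (3 * b ^ 2 - 4) * (x ^ 2 - b ^ 2)) =
      (8 * x ^ 2 + b ^ 2 * (3 * b ^ 2 - 4)) ^ 2 + b ^ 4 * (4 - 3 * b ^ 2) * (3 * b ^ 2 + 12) := by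
  ring

lemma quartic_pos {b : ℝ} (hb0 : b ≠ 0) (hb : 3 * b ^ 2 < 4) (x : ℝ) :
    0 < 4 * x ^ 4 + b ^ 2 * (3 * b ^ 2 - 4) * (x ^ 2 - b ^ 2) := by
  have hrest : 0 < b ^ 4 * (4 - 3 * b ^ 2) * (3 * b ^ 2 + 12) :=
    mul_pos (mul_pos (by positivity) (by linarith)) (by positivity)
  have h16 := sixteen_mul_quartic_eq b x
  linarith [sq_nonneg (8 * x ^ 2 + b ^ 2 * (3 * b ^ 2 - 4))]

/-- For 0 < b < 2/√3, M_b(x) = 4x⁴ + b²(3b² - 4)(x² - b²) is strictly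
positive on ℝ. -/
theorem M_b_positive (b : ℝ) (hb0 : 0 < b) (hb : b < 2 / Real.sqrt 3) :
    ∀ x : ℝ, 0 < 4 * x ^ 4 + b ^ 2 * (3 * b ^ 2 - 4) * (x ^ 2 - b ^ 2) :=
  quartic_pos hb0.ne' (three_mul_sq_lt_four_of_lt_two_div_sqrt_three hb0.le hb)
end

section
/- For the van der Pol system ẋ = y, ẏ = -x + (b² - x²)y and V_b(x,y) = 6y² + 2(x² - 3b²)xy + 6x² + b²(3b² - 4), the expression M := (∂V_b/∂x)·y + (∂V_b/∂y)·(-x + (b² - x²)y) - V_b·div equals 4x⁴ + b²(3b² - 4)(x² - b²), where div = b² - x² is the divergence of the vector field. -/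
/-- Dulac-type function for the van der Pol system. -/
noncomputable def Vvdp (b x y : ℝ) : ℝ :=
  6 * y ^ 2 + 2 * (x ^ 2 - 3 * b ^ 2) * x * y + 6 * x ^ 2 + b ^ 2 * (3 * b ^ 2 - 4)

theorem hasDerivAt_cubic {𝕜 : Type*} [NontriviallyNormedField 𝕜] (a c d e x : 𝕜) :
    HasDerivAt (fun s => a * s ^ 3 + c * s ^ 2 + d * s + e) (3 * a * x ^ 2 + 2 * c * x + d) x := by
  have h := ((((hasDerivAt_pow 3 x).const_mul a).add ((hasDerivAt_pow 2 x).const_mul c)).add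
    ((hasDerivAt_id' x).const_mul d)).add_const e
  exact h.congr_deriv (by push_cast; ring)

theorem Vvdp_eq_cubic_fst (b y : ℝ) :
    (fun s => Vvdp b s y) =
      fun s => 2 * y * s ^ 3 + 6 * s ^ 2 + -6 * b ^ 2 * y * s
        + (6 * y ^ 2 + b ^ 2 * (3 * b ^ 2 - 4)) := by
  funext s; unfold Vvdp; ring

theorem Vvdp_eq_cubic_snd (b x : ℝ) :
    (fun s => Vvdp b x s) =
      fun s => 0 * s ^ 3 + 6 * s ^ 2 + 2 * (x ^ 2 - 3 * b ^ 2) * x * s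
        + (6 * x ^ 2 + b ^ 2 * (3 * b ^ 2 - 4)) := by
  funext s; unfold Vvdp; ring

theorem deriv_Vvdp_fst (b x y : ℝ) :
    deriv (fun s => Vvdp b s y) x = 6 * (x ^ 2 - b ^ 2) * y + 12 * x := by
  rw [Vvdp_eq_cubic_fst, (hasDerivAt_cubic _ _ _ _ x).deriv]; ring

theorem deriv_Vvdp_snd (b x y : ℝ) :
    deriv (fun s => Vvdp b x s) y = 12 * y + 2 * (x ^ 2 - 3 * b ^ 2) * x := by
  rw [Vvdp_eq_cubic_snd, (hasDerivAt_cubic _ _ _ _ y).deriv]; ring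

/-- For the van der Pol system X = (y, -x + (b² - x²)y) with divergence b² - x²,
M = ⟨∇V_b, X⟩ - V_b · div X equals 4x⁴ + b²(3b² - 4)(x² - b²). -/
theorem vdp_M_identity (b x y : ℝ) :
    (deriv (fun s : ℝ => Vvdp b s y) x) * y
      + (deriv (fun s : ℝ => Vvdp b x s) y) * (-x + (b ^ 2 - x ^ 2) * y)
      - Vvdp b x y * (b ^ 2 - x ^ 2)
      = 4 * x ^ 4 + b ^ 2 * (3 * b ^ 2 - 4) * (x ^ 2 - b ^ 2) := by
  rw [deriv_Vvdp_fst, deriv_Vvdp_snd, Vvdp]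
  ring
end

section
/- Let G(x,y) be a real polynomial in two variables and write G(εᵖX, ε^qY) = ε^m G⁰(X,Y) + ε^{m+1} G¹(X,Y,ε) for all ε > 0, where p, q, m are natural numbers with gcd(p,q) = 1, G⁰ is quasi-homogeneous of type (p,q) and degree m, and G¹ is polynomial. If the only real solution of G⁰(X,Y) = 0 is (0,0), then the origin is an isolated point of the real zero set {(x,y) ∈ ℝ² : G(x,y) = 0}. -/
/-!
Away from the origin write `v = (ρ ^ p * X, ρ ^ q * Y)` with `ρ = max (|x| ^ (1/p)) (|y| ^ (1/q))`
and `(X, Y)` on the unit sphere of `ℝ × ℝ` (the sup norm). Then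
`G v = ρ ^ m * (G⁰ X Y + ρ * G¹ X Y ρ)`, and since `G⁰` has no zero on the compact sphere, neither
has `G⁰ + ρ G¹` for all small `ρ`. The degenerate weights are ruled out by letting `ε → 0` in the
quasi-homogeneity relation: it gives `p = 0 ↔ m = 0 ↔ q = 0`, which `gcd(p, q) = 1` forbids.
-/

open Filter Function Set Topology

theorem eq_at_zero_of_forall_pos {X : Type*} [TopologicalSpace X] [T2Space X] {f g : ℝ → X}
    (hf : Continuous f) (hg : Continuous g) (h : ∀ ε, 0 < ε → f ε = g ε) : f 0 = g 0 :=
  EqOn.closure (s := Ioi 0) h hf hg (by rw [closure_Ioi]; exact self_mem_Ici)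

theorem continuous_uncurry_of_eq_eval {F : ℝ → ℝ → ℝ}
    (hF : ∃ P : MvPolynomial (Fin 2) ℝ, ∀ x y, F x y = MvPolynomial.eval ![x, y] P) :
    Continuous (uncurry F) := by
  obtain ⟨P, hP⟩ := hF
  rw [show uncurry F = fun v => MvPolynomial.eval ![v.1, v.2] P from funext fun v => hP v.1 v.2]
  exact (MvPolynomial.continuous_eval P).comp (by fun_prop)

theorem continuous_uncurry_uncurry_of_eq_eval {F : ℝ → ℝ → ℝ → ℝ}
    (hF : ∃ P : MvPolynomial (Fin 3) ℝ, ∀ x y z, F x y z = MvPolynomial.eval ![x, y, z] P) :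
    Continuous (uncurry (uncurry F)) := by
  obtain ⟨P, hP⟩ := hF
  rw [show uncurry (uncurry F) = fun v => MvPolynomial.eval ![v.1.1, v.1.2, v.2] P from
    funext fun v => hP v.1.1 v.1.2 v.2]
  exact (MvPolynomial.continuous_eval P).comp (by fun_prop)

def IsQuasiHomogeneous (p q m : ℕ) (F : ℝ → ℝ → ℝ) : Prop :=
  ∀ ε : ℝ, 0 < ε → ∀ X Y : ℝ, F (ε ^ p * X) (ε ^ q * Y) = ε ^ m * F X Y

namespace IsQuasiHomogeneous

variable {p q m : ℕ} {F : ℝ → ℝ → ℝ}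

theorem swap (hF : IsQuasiHomogeneous p q m F) : IsQuasiHomogeneous q p m (fun x y => F y x) :=
  fun ε hε X Y => hF ε hε Y X

theorem apply_zero_pow_mul (hF : IsQuasiHomogeneous p q m F) (hc : Continuous (uncurry F))
    (X Y : ℝ) : F (0 ^ p * X) (0 ^ q * Y) = 0 ^ m * F X Y :=
  eq_at_zero_of_forall_pos (f := fun ε => F (ε ^ p * X) (ε ^ q * Y))
    (hc.comp (f := fun ε : ℝ => (ε ^ p * X, ε ^ q * Y)) (by fun_prop)) (by fun_prop)
    fun ε hε => hF ε hε X Y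

theorem left_weight_eq_zero_iff (hF : IsQuasiHomogeneous p q m F) (hc : Continuous (uncurry F))
    (h00 : F 0 0 = 0) (h10 : F 1 0 ≠ 0) : p = 0 ↔ m = 0 := by
  have h := hF.apply_zero_pow_mul hc 1 0
  simp only [mul_one, mul_zero] at h
  rcases eq_or_ne p 0 with rfl | hp
  · simp only [pow_zero, true_iff] at h ⊢
    by_contra hm
    simp [zero_pow hm, h10] at h
  · simp only [hp, false_iff, zero_pow hp, h00] at h ⊢
    rintro rfl
    exact h10 (by simpa using h.symm)

end IsQuasiHomogeneous

noncomputable def quasiNorm (p q : ℕ) (v : ℝ × ℝ) : ℝ :=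
  max (|v.1| ^ (p⁻¹ : ℝ)) (|v.2| ^ (q⁻¹ : ℝ))

theorem continuous_quasiNorm (p q : ℕ) : Continuous (quasiNorm p q) := by
  unfold quasiNorm
  have := Real.continuous_rpow_const (q := (p⁻¹ : ℝ)) (by positivity)
  have := Real.continuous_rpow_const (q := (q⁻¹ : ℝ)) (by positivity)
  fun_prop

theorem quasiNorm_zero {p q : ℕ} (hp : p ≠ 0) (hq : q ≠ 0) : quasiNorm p q 0 = 0 := by
  simp [quasiNorm, hp, hq]

theorem quasiNorm_pos (p q : ℕ) {v : ℝ × ℝ} (hv : v ≠ 0) : 0 < quasiNorm p q v := by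
  rcases ne_or_eq v.1 0 with h | h
  · exact lt_max_of_lt_left (Real.rpow_pos_of_pos (abs_pos.mpr h) _)
  · have h2 : v.2 ≠ 0 := fun h2 => hv (Prod.ext h h2)
    exact lt_max_of_lt_right (Real.rpow_pos_of_pos (abs_pos.mpr h2) _)

theorem norm_div_quasiNorm_pow {p q : ℕ} (hp : p ≠ 0) (hq : q ≠ 0) {v : ℝ × ℝ} (hv : v ≠ 0) :
    ‖(v.1 / quasiNorm p q v ^ p, v.2 / quasiNorm p q v ^ q)‖ = 1 := by
  have hε := quasiNorm_pos p q hv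
  set a := |v.1| ^ (p⁻¹ : ℝ)
  set b := |v.2| ^ (q⁻¹ : ℝ)
  set ε := quasiNorm p q v
  have ha : |v.1 / ε ^ p| = (a / ε) ^ p := by
    rw [abs_div, abs_pow, abs_of_pos hε, div_pow, Real.rpow_inv_natCast_pow (abs_nonneg _) hp]
  have hb : |v.2 / ε ^ q| = (b / ε) ^ q := by
    rw [abs_div, abs_pow, abs_of_pos hε, div_pow, Real.rpow_inv_natCast_pow (abs_nonneg _) hq]
  rw [Prod.norm_mk, Real.norm_eq_abs, Real.norm_eq_abs, ha, hb]
  rcases le_total a b with hab | hab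
  · have hεb : ε = b := max_eq_right hab
    rw [hεb, div_self (hεb ▸ hε.ne'), one_pow]
    exact max_eq_right (pow_le_one₀ (by positivity) ((div_le_one (hεb ▸ hε)).mpr hab))
  · have hεa : ε = a := max_eq_left hab
    rw [hεa, div_self (hεa ▸ hε.ne'), one_pow]
    exact max_eq_left (pow_le_one₀ (by positivity) ((div_le_one (hεa ▸ hε)).mpr hab))

def HasQuasiHomogeneousExpansion (p q m : ℕ) (G G0 : ℝ → ℝ → ℝ) (G1 : ℝ → ℝ → ℝ → ℝ) : Prop :=
  ∀ ε : ℝ, 0 < ε → ∀ X Y : ℝ, G (ε ^ p * X) (ε ^ q * Y) = ε ^ m * G0 X Y + ε ^ (m + 1) * G1 X Y ε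

namespace HasQuasiHomogeneousExpansion

variable {p q m : ℕ} {G G0 : ℝ → ℝ → ℝ} {G1 : ℝ → ℝ → ℝ → ℝ}

theorem add_mul_eq_zero (h : HasQuasiHomogeneousExpansion p q m G G0 G1) {ε X Y : ℝ}
    (hε : 0 < ε) (hG : G (ε ^ p * X) (ε ^ q * Y) = 0) : G0 X Y + ε * G1 X Y ε = 0 := by
  have h := h ε hε X Y
  rw [hG, pow_succ, mul_assoc, ← mul_add] at h
  exact (mul_eq_zero.mp h.symm).resolve_left (pow_ne_zero _ hε.ne')

theorem apply_zero_zero (h : HasQuasiHomogeneousExpansion p q m G G0 G1)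
    (hG1 : Continuous (uncurry (uncurry G1))) (hG : G 0 0 = 0) : G0 0 0 = 0 := by
  have h0 := eq_at_zero_of_forall_pos (f := fun ε => G0 0 0 + ε * G1 0 0 ε) (g := 0)
    (continuous_const.add
      (continuous_id.mul (hG1.comp (f := fun ε => ((0, 0), ε)) (by fun_prop))))
    continuous_const fun ε hε => h.add_mul_eq_zero hε (by simpa using hG)
  simpa using h0

theorem eventually_eq_zero_imp_eq_zero (h : HasQuasiHomogeneousExpansion p q m G G0 G1)
    (hp : p ≠ 0) (hq : q ≠ 0) (hG0 : Continuous (uncurry G0))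
    (hG1 : Continuous (uncurry (uncurry G1)))
    (hsphere : ∀ w ∈ Metric.sphere (0 : ℝ × ℝ) 1, G0 w.1 w.2 ≠ 0) :
    ∀ᶠ v in 𝓝 (0 : ℝ × ℝ), G v.1 v.2 = 0 → v = 0 := by
  have hH : ∀ᶠ ε in 𝓝 (0 : ℝ), ∀ w ∈ Metric.sphere (0 : ℝ × ℝ) 1,
      G0 w.1 w.2 + ε * G1 w.1 w.2 ε ≠ 0 :=
    (isCompact_sphere (0 : ℝ × ℝ) 1).eventually_forall_of_forall_eventually fun w hw =>
      ContinuousAt.eventually_ne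
        (g := fun z : ℝ × (ℝ × ℝ) => G0 z.2.1 z.2.2 + z.1 * G1 z.2.1 z.2.2 z.1)
        ((hG0.comp continuous_snd).add (continuous_fst.mul
          (hG1.comp (f := fun z : ℝ × (ℝ × ℝ) => (z.2, z.1)) (by fun_prop)))).continuousAt
        (by simpa using hsphere w hw)
  have hρ : Tendsto (quasiNorm p q) (𝓝 0) (𝓝 0) :=
    quasiNorm_zero hp hq ▸ (continuous_quasiNorm p q).tendsto 0
  filter_upwards [hρ.eventually hH] with v hv hGv
  by_contra hv0
  have hε := quasiNorm_pos p q hv0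
  refine hv _ (mem_sphere_zero_iff_norm.mpr (norm_div_quasiNorm_pow hp hq hv0))
    (h.add_mul_eq_zero hε ?_)
  rwa [mul_div_cancel₀ _ (pow_ne_zero _ hε.ne'), mul_div_cancel₀ _ (pow_ne_zero _ hε.ne')]

end HasQuasiHomogeneousExpansion

theorem isolated_point_criterion_general (p q m : ℕ) (hpq : Nat.gcd p q = 1)
    (G G0 : ℝ → ℝ → ℝ) (G1 : ℝ → ℝ → ℝ → ℝ)
    (hG0poly : ∃ P : MvPolynomial (Fin 2) ℝ, ∀ x y, G0 x y = MvPolynomial.eval ![x, y] P)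
    (hG1poly : ∃ P : MvPolynomial (Fin 3) ℝ, ∀ x y e, G1 x y e = MvPolynomial.eval ![x, y, e] P)
    (hG00 : G 0 0 = 0)
    (hqh : ∀ ε : ℝ, 0 < ε → ∀ X Y : ℝ, G0 (ε ^ p * X) (ε ^ q * Y) = ε ^ m * G0 X Y)
    (hdec : ∀ ε : ℝ, 0 < ε → ∀ X Y : ℝ,
      G (ε ^ p * X) (ε ^ q * Y) = ε ^ m * G0 X Y + ε ^ (m + 1) * G1 X Y ε)
    (hzero : ∀ X Y : ℝ, G0 X Y = 0 → X = 0 ∧ Y = 0) :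
    ∃ U : Set (ℝ × ℝ), IsOpen U ∧ ((0 : ℝ), (0 : ℝ)) ∈ U ∧
      ∀ v ∈ U, G v.1 v.2 = 0 → v = ((0 : ℝ), (0 : ℝ)) := by
  have hG0 := continuous_uncurry_of_eq_eval hG0poly
  have hG1 := continuous_uncurry_uncurry_of_eq_eval hG1poly
  have hG0ne : ∀ w : ℝ × ℝ, w ≠ 0 → G0 w.1 w.2 ≠ 0 := fun w hw h =>
    hw (Prod.ext_iff.mpr (hzero _ _ h))
  have hG000 := HasQuasiHomogeneousExpansion.apply_zero_zero hdec hG1 hG00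
  have hpm := IsQuasiHomogeneous.left_weight_eq_zero_iff hqh hG0 hG000 (hG0ne (1, 0) (by simp))
  have hqm := (IsQuasiHomogeneous.swap hqh).left_weight_eq_zero_iff (hG0.comp continuous_swap)
    hG000 (hG0ne (0, 1) (by simp))
  have hp : p ≠ 0 := by rintro rfl; simp [hqm.mpr (hpm.mp rfl)] at hpq
  have hq : q ≠ 0 := by rintro rfl; simp [hpm.mpr (hqm.mp rfl)] at hpq
  obtain ⟨U, hU, hUo, h0U⟩ := eventually_nhds_iff.mp <|
    HasQuasiHomogeneousExpansion.eventually_eq_zero_imp_eq_zero hdec hp hq hG0 hG1 fun w hw =>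
      hG0ne w (ne_zero_of_mem_unit_sphere ⟨w, hw⟩)
  exact ⟨U, hUo, h0U, hU⟩

/-- If G(εᵖX, ε^qY) = ε^m G⁰(X,Y) + ε^{m+1} G¹(X,Y,ε) for ε > 0, with p, q, m
natural numbers, gcd(p,q) = 1, G, G⁰, G¹ polynomial, G⁰ quasi-homogeneous of
type (p,q) and degree m, and G⁰ vanishes (over ℝ) only at the origin, then the
origin is an isolated point of {G = 0} ⊂ ℝ². -/
theorem isolated_point_criterion (p q m : ℕ) (hpq : Nat.gcd p q = 1)
    (G G0 : ℝ → ℝ → ℝ) (G1 : ℝ → ℝ → ℝ → ℝ)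
    (hGpoly : ∃ P : MvPolynomial (Fin 2) ℝ, ∀ x y, G x y = MvPolynomial.eval ![x, y] P)
    (hG0poly : ∃ P : MvPolynomial (Fin 2) ℝ, ∀ x y, G0 x y = MvPolynomial.eval ![x, y] P)
    (hG1poly : ∃ P : MvPolynomial (Fin 3) ℝ, ∀ x y e, G1 x y e = MvPolynomial.eval ![x, y, e] P)
    (hG00 : G 0 0 = 0)
    (hqh : ∀ ε : ℝ, 0 < ε → ∀ X Y : ℝ, G0 (ε ^ p * X) (ε ^ q * Y) = ε ^ m * G0 X Y)
    (hdec : ∀ ε : ℝ, 0 < ε → ∀ X Y : ℝ,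
      G (ε ^ p * X) (ε ^ q * Y) = ε ^ m * G0 X Y + ε ^ (m + 1) * G1 X Y ε)
    (hzero : ∀ X Y : ℝ, G0 X Y = 0 → X = 0 ∧ Y = 0) :
    ∃ U : Set (ℝ × ℝ), IsOpen U ∧ ((0 : ℝ), (0 : ℝ)) ∈ U ∧
      ∀ v ∈ U, G v.1 v.2 = 0 → v = ((0 : ℝ), (0 : ℝ)) :=
  isolated_point_criterion_general p q m hpq G G0 G1 hG0poly hG1poly hG00 hqh hdec hzero
end

section
/- For F(x,y) = y² + x³ + bx² + bx (a family depending on a parameter b), the iterated discriminants are Δ²_{x,y}(F) = -110592·b⁹·(b-4)·(b-3)⁶ and Δ²_{y,x}(F) = 256·b³·(b-4); in particular Δ²_{x,y}(F) ≠ Δ²_{y,x}(F) as polynomials in b, and gcd of the two (up to units) is b³(b-4). -/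
open Polynomial

/-- The Sylvester matrix of two polynomials f, g (of degrees n = deg f,
m = deg g): the first m rows carry the shifted coefficient lists of f and the
last n rows those of g. -/
noncomputable def sylvesterMatrix {R : Type*} [CommRing R] (f g : Polynomial R) :
    Matrix (Fin (f.natDegree + g.natDegree)) (Fin (f.natDegree + g.natDegree)) R :=
  Matrix.of fun i j =>
    if (i : ℕ) < g.natDegree then
      (if (i : ℕ) ≤ (j : ℕ) ∧ (j : ℕ) ≤ (i : ℕ) + f.natDegree then
        f.coeff (f.natDegree + i - j) else 0)
    else
      (if (i : ℕ) - g.natDegree ≤ (j : ℕ) ∧ (j : ℕ) ≤ (i : ℕ) - g.natDegree + g.natDegree then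
        g.coeff (g.natDegree + ((i : ℕ) - g.natDegree) - j) else 0)

/-- The resultant of two polynomials, as the determinant of their Sylvester
matrix. -/
noncomputable def resultant {R : Type*} [CommRing R] (f g : Polynomial R) : R :=
  (sylvesterMatrix f g).det

/-- The discriminant of a polynomial:
Δ(f) = (-1)^{n(n-1)/2} Res(f, f') / lc(f), where n = deg f. -/
noncomputable def discrim' {R : Type*} [CommRing R] [Div R] (f : Polynomial R) : R :=
  (-1 : R) ^ (f.natDegree * (f.natDegree - 1) / 2) *
    (_root_.resultant f (derivative f) / f.leadingCoeff)

/-!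
`sylvesterMatrix` is Mathlib's `Polynomial.sylvester` transposed, with rows and columns in
reverse order, so `resultant` is `Polynomial.resultant` and, for nonconstant polynomials,
`discrim'` is `Polynomial.discr`. The inner discriminants then come from the quadratic and cubic
formulas. Since `F` is even in `y`, `Δ_x(F) = -27 y⁴ + (18 b² - 4 b³) y² + b⁴ - 4 b³` is
biquadratic, and `A y⁴ + B y² + K` has discriminant `16 A K (B² - 4 A K)²`, read off from its
sparse `7 × 7` Sylvester matrix.
-/

theorem sylvesterMatrix_eq_submatrix_transpose_sylvester {R : Type*} [CommRing R] (f g : R[X]) :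
    sylvesterMatrix f g =
      (sylvester f g f.natDegree g.natDegree).transpose.submatrix Fin.revPerm Fin.revPerm := by
  ext ⟨i, hi⟩ ⟨j, hj⟩
  simp only [sylvesterMatrix, sylvester, Fin.addCases, Matrix.of_apply, Matrix.submatrix_apply,
    Matrix.transpose_apply, Fin.revPerm_apply, Fin.val_rev, Set.mem_Icc, Fin.val_subNat,
    Fin.val_castLT, Fin.val_cast, eq_rec_constant]
  split_ifs <;> first | rfl | omega | (congr 1; omega)

theorem resultant_eq_polynomial_resultant {R : Type*} [CommRing R] (f g : R[X]) :
    _root_.resultant f g = Polynomial.resultant f g := by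
  rw [_root_.resultant, sylvesterMatrix_eq_submatrix_transpose_sylvester,
    Matrix.det_submatrix_equiv_self, Matrix.det_transpose, Polynomial.resultant]

namespace Polynomial

theorem sylvester_four_three {R : Type*} [CommRing R] (f g : R[X]) :
    sylvester f g 4 3 =
      !![g.coeff 0, 0, 0, 0, f.coeff 0, 0, 0;
        g.coeff 1, g.coeff 0, 0, 0, f.coeff 1, f.coeff 0, 0;
        g.coeff 2, g.coeff 1, g.coeff 0, 0, f.coeff 2, f.coeff 1, f.coeff 0;
        g.coeff 3, g.coeff 2, g.coeff 1, g.coeff 0, f.coeff 3, f.coeff 2, f.coeff 1;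
        0, g.coeff 3, g.coeff 2, g.coeff 1, f.coeff 4, f.coeff 3, f.coeff 2;
        0, 0, g.coeff 3, g.coeff 2, 0, f.coeff 4, f.coeff 3;
        0, 0, 0, g.coeff 3, 0, 0, f.coeff 4] := by
  ext i j
  fin_cases i <;> fin_cases j <;> rfl

theorem resultant_biquadratic_derivative {R : Type*} [CommRing R] (A B K : R) :
    resultant (C A * X ^ 4 + C B * X ^ 2 + C K)
        (derivative (C A * X ^ 4 + C B * X ^ 2 + C K)) 4 3 =
      16 * A ^ 2 * K * (B ^ 2 - 4 * A * K) ^ 2 := by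
  rw [resultant, sylvester_four_three]
  simp only [coeff_derivative]
  norm_num [coeff_X, coeff_C]
  simp [Matrix.det_succ_row_zero, Fin.sum_univ_succ, Fin.succAbove]
  ring

theorem discr_biquadratic {R : Type*} [CommRing R] [IsDomain R] {A : R} (B K : R) (hA : A ≠ 0) :
    (C A * X ^ 4 + C B * X ^ 2 + C K).discr = 16 * A * K * (B ^ 2 - 4 * A * K) ^ 2 := by
  have hdeg : (C A * X ^ 4 + C B * X ^ 2 + C K).natDegree = 4 := by compute_degree!
  have hlc : (C A * X ^ 4 + C B * X ^ 2 + C K).leadingCoeff = A := by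
    rw [leadingCoeff, hdeg]
    simp
  have h := resultant_deriv (natDegree_pos_iff_degree_pos.mp (hdeg ▸ four_pos))
  rw [hdeg, hlc, resultant_biquadratic_derivative] at h
  norm_num at h
  exact mul_left_cancel₀ hA (by linear_combination -h)

end Polynomial

section Discrim'

variable {R : Type*} [EuclideanDomain R] [CharZero R]

theorem discrim'_eq_discr {f : R[X]} (hf : 0 < f.degree) : discrim' f = f.discr := by
  have hlc : f.leadingCoeff ≠ 0 := leadingCoeff_ne_zero.mpr (ne_zero_of_degree_gt hf)
  rw [discrim', resultant_eq_polynomial_resultant, Polynomial.resultant, natDegree_derivative,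
    ← Polynomial.resultant, resultant_deriv hf, mul_right_comm, mul_div_cancel_right₀ _ hlc,
    ← mul_assoc, ← pow_add, Even.neg_one_pow ⟨_, rfl⟩, one_mul]

theorem discrim'_X_sq_add_C (q : R) : discrim' (X ^ 2 + C q) = -4 * q := by
  have hdeg : (X ^ 2 + C q).degree = 2 := by compute_degree!
  rw [discrim'_eq_discr (by rw [hdeg]; norm_num), discr_of_degree_eq_two hdeg]
  simp

theorem discrim'_cubic {a : R} (p q r : R) (ha : a ≠ 0) :
    discrim' (C a * X ^ 3 + C p * X ^ 2 + C q * X + C r) =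
      p ^ 2 * q ^ 2 - 4 * a * q ^ 3 - 4 * p ^ 3 * r - 27 * a ^ 2 * r ^ 2 + 18 * a * p * q * r := by
  have hdeg : (C a * X ^ 3 + C p * X ^ 2 + C q * X + C r).degree = 3 := by compute_degree!
  rw [discrim'_eq_discr (by rw [hdeg]; norm_num), discr_of_degree_eq_three hdeg]
  simp [coeff_X, coeff_C]

theorem discrim'_biquadratic {A : R} (B K : R) (hA : A ≠ 0) :
    discrim' (C A * X ^ 4 + C B * X ^ 2 + C K) = 16 * A * K * (B ^ 2 - 4 * A * K) ^ 2 := by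
  have hdeg : (C A * X ^ 4 + C B * X ^ 2 + C K).degree = 4 := by compute_degree!
  rw [discrim'_eq_discr (by rw [hdeg]; norm_num), discr_biquadratic B K hA]

end Discrim'

theorem associated_gcd_unit_mul_of_dvd {α : Type*} [CommMonoidWithZero α] [GCDMonoid α]
    {a b u : α} (hu : IsUnit u) (h : u * b ∣ a) : Associated (gcd a (u * b)) b :=
  (associated_gcd_right_iff.mpr h).symm.trans (associated_unit_mul_left b u hu)

/-- For F(x,y) = y² + x³ + bx² + bx one has
Δ²_{x,y}(F) = -110592 b⁹ (b-4)(b-3)⁶ and Δ²_{y,x}(F) = 256 b³ (b-4);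
in particular the two double discriminants differ as polynomials in b, and
their gcd, up to units, is b³(b-4). -/
theorem double_discriminants_example :
    (∀ b : ℝ,
      discrim' (discrim'
        ((X : Polynomial (Polynomial ℝ)) ^ 3 + C (C b) * X ^ 2 + C (C b) * X
          + C (X ^ 2)))
        = -110592 * b ^ 9 * (b - 4) * (b - 3) ^ 6) ∧
    (∀ b : ℝ,
      discrim' (discrim'
        ((X : Polynomial (Polynomial ℝ)) ^ 2
          + C (X ^ 3 + C b * X ^ 2 + C b * X)))
        = 256 * b ^ 3 * (b - 4)) ∧
    ((-110592 : Polynomial ℝ) * X ^ 9 * (X - 4) * (X - 3) ^ 6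
        ≠ 256 * X ^ 3 * (X - 4)) ∧
    Associated
      (gcd ((-110592 : Polynomial ℝ) * X ^ 9 * (X - 4) * (X - 3) ^ 6)
        (256 * X ^ 3 * (X - 4)))
      (X ^ 3 * (X - 4)) := by
  refine ⟨fun b => ?_, fun b => ?_, fun h => ?_, ?_⟩
  · have inner : discrim' ((X : Polynomial (Polynomial ℝ)) ^ 3 + C (C b) * X ^ 2 + C (C b) * X
        + C (X ^ 2)) = C (-27) * X ^ 4 + C (18 * b ^ 2 - 4 * b ^ 3) * X ^ 2
          + C (b ^ 4 - 4 * b ^ 3) := by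
      rw [← one_mul (X ^ 3), ← C_1, discrim'_cubic _ _ _ one_ne_zero]
      simp only [map_sub, map_mul, map_pow, map_neg, map_ofNat]
      ring
    rw [inner, discrim'_biquadratic _ _ (by norm_num)]
    ring
  · have expand : (-4 * (X ^ 3 + C b * X ^ 2 + C b * X) : ℝ[X]) =
        C (-4) * X ^ 3 + C (-4 * b) * X ^ 2 + C (-4 * b) * X + C 0 := by
      simp only [map_mul, map_neg, map_ofNat, C_0]
      ring
    rw [discrim'_X_sq_add_C, expand, discrim'_cubic _ _ _ (by norm_num)]
    ring
  · have h1 := congrArg (eval 1) h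
    norm_num at h1
  · have hunit : IsUnit (256 : ℝ[X]) := by
      rw [← map_ofNat C]
      exact isUnit_C.mpr (by norm_num)
    rw [mul_assoc 256]
    exact associated_gcd_unit_mul_of_dvd hunit (Dvd.intro (-432 * X ^ 6 * (X - 3) ^ 6) (by ring))
end

section
/- For the polynomial F(x,y) = x³y³ + x + 1, both double discriminants vanish, Δ²_{y,x}(F) = Δ²_{x,y}(F) = 0, yet the complex curve {F = 0} has no singular points: F, F_x = 3x²y³ + 1, and F_y = 3x³y² have no common zero in ℂ². This shows the converse of the singular-point criterion via double discriminants fails. -/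
open Polynomial

/-!
Viewed as a cubic `a t³ + c t + d` over `ℂ[s]` (with `(s, t) = (x, y)` or `(y, x)`), `F` has inner
discriminant `-(4ac³ + 27a²d²) = -a (4c³ + 27ad²)`, and here the leading coefficient is `a = s³`.
Hence the inner discriminant has a multiple root at `s = 0`, coming from the branches of the curve
that escape to infinity above `s = 0` rather than from a singular point, and the outer discriminant
vanishes. On the other hand `F_y = 3x³y² = 0` forces `x = 0` or `y = 0`, which contradict `F = 0`
and `F_x = 0` respectively.
-/

/-- A common root at `0` makes the last column of the Sylvester matrix vanish. -/
theorem resultant_eq_zero_of_coeff_zero_eq_zero {R : Type*} [CommRing R] {f g : R[X]}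
    (hf : f.coeff 0 = 0) (hg : g.coeff 0 = 0) (h : f.natDegree + g.natDegree ≠ 0) :
    _root_.resultant f g = 0 := by
  apply Matrix.det_eq_zero_of_column_eq_zero ⟨f.natDegree + g.natDegree - 1, by omega⟩
  rintro ⟨i, hi⟩
  simp only [sylvesterMatrix, Matrix.of_apply]
  split_ifs
  · convert hf using 2; omega
  · rfl
  · convert hg using 2; omega
  · rfl

theorem discrim'_eq_zero_of_X_sq_dvd {R : Type*} [CommRing R] [Div R] [MulDivCancelClass R]
    {g : R[X]} (hg : g ≠ 0) (hX : X ^ 2 ∣ g) : discrim' g = 0 := by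
  have hcoeff := X_pow_dvd_iff.mp hX
  have hdeg : g.natDegree ≠ 0 := fun h ↦
    hg (by rw [eq_C_of_natDegree_eq_zero h, hcoeff 0 (by norm_num), C_0])
  have hres : _root_.resultant g (derivative g) = 0 :=
    resultant_eq_zero_of_coeff_zero_eq_zero (hcoeff 0 (by norm_num))
      (by simp [coeff_derivative, hcoeff 1 (by norm_num)]) (by omega)
  have hzero_div : (0 : R) / g.leadingCoeff = 0 := by
    simpa using mul_div_cancel_right₀ (0 : R) (leadingCoeff_ne_zero.mpr hg)
  rw [discrim', hres, hzero_div, mul_zero]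

section DepressedCubic

variable {R : Type*} [CommRing R] (a c d : R)

theorem natDegree_depressedCubic (ha : (3 : R) * a ≠ 0) :
    (C a * X ^ 3 + C c * X + C d).natDegree = 3 := by
  have : a ≠ 0 := by rintro rfl; simp at ha
  compute_degree!

theorem derivative_depressedCubic :
    derivative (C a * X ^ 3 + C c * X + C d) = C (3 * a) * X ^ 2 + C c := by
  simp [derivative_pow]; ring

theorem natDegree_derivative_depressedCubic (ha : (3 : R) * a ≠ 0) :
    (derivative (C a * X ^ 3 + C c * X + C d)).natDegree = 2 := by
  rw [derivative_depressedCubic]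
  compute_degree!

theorem leadingCoeff_depressedCubic (ha : (3 : R) * a ≠ 0) :
    (C a * X ^ 3 + C c * X + C d).leadingCoeff = a := by
  rw [leadingCoeff, natDegree_depressedCubic a c d ha]
  simp

theorem resultant_depressedCubic (ha : (3 : R) * a ≠ 0) :
    _root_.resultant (C a * X ^ 3 + C c * X + C d) (derivative (C a * X ^ 3 + C c * X + C d)) =
      4 * a ^ 2 * c ^ 3 + 27 * a ^ 3 * d ^ 2 := by
  have hdeg : (C a * X ^ 3 + C c * X + C d).natDegree
      + (derivative (C a * X ^ 3 + C c * X + C d)).natDegree = 5 := by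
    rw [natDegree_depressedCubic a c d ha, natDegree_derivative_depressedCubic a c d ha]
  have hsylvester : (sylvesterMatrix (C a * X ^ 3 + C c * X + C d)
      (derivative (C a * X ^ 3 + C c * X + C d))).submatrix
        (finCongr hdeg.symm) (finCongr hdeg.symm) =
      !![a, 0, c, d, 0;
         0, a, 0, c, d;
         3 * a, 0, c, 0, 0;
         0, 3 * a, 0, c, 0;
         0, 0, 3 * a, 0, c] := by
    ext i j
    simp only [sylvesterMatrix, Matrix.submatrix_apply, Matrix.of_apply, finCongr_apply,
      Fin.val_cast]
    rw [natDegree_depressedCubic a c d ha, natDegree_derivative_depressedCubic a c d ha,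
      derivative_depressedCubic]
    fin_cases i <;> fin_cases j <;> simp [coeff_C, coeff_X_pow, mul_assoc, coeff_C_mul]
  rw [_root_.resultant, ← Matrix.det_submatrix_equiv_self (finCongr hdeg.symm), hsylvester]
  simp [Matrix.det_succ_row_zero, Fin.sum_univ_succ, Fin.succAbove]
  ring

theorem discrim'_depressedCubic [Div R] [MulDivCancelClass R]
    (ha : (3 : R) * a ≠ 0) :
    discrim' (C a * X ^ 3 + C c * X + C d) = -(4 * a * c ^ 3 + 27 * a ^ 2 * d ^ 2) := by
  have ha₀ : a ≠ 0 := right_ne_zero_of_mul ha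
  rw [discrim', natDegree_depressedCubic a c d ha, resultant_depressedCubic a c d ha,
    leadingCoeff_depressedCubic a c d ha,
    show 4 * a ^ 2 * c ^ 3 + 27 * a ^ 3 * d ^ 2 = a * (4 * a * c ^ 3 + 27 * a ^ 2 * d ^ 2) by ring,
    mul_div_cancel_left₀ _ ha₀]
  norm_num

end DepressedCubic

theorem discrim'_discrim'_depressedCubic_eq_zero_of_X_sq_dvd {K : Type*} [Field K]
    {a c d : K[X]} (ha : (3 : K[X]) * a ≠ 0) (hX : X ^ 2 ∣ a)
    (hcd : 4 * c ^ 3 + 27 * a * d ^ 2 ≠ 0) :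
    discrim' (discrim' (C a * X ^ 3 + C c * X + C d)) = 0 := by
  have hfactor : -(4 * a * c ^ 3 + 27 * a ^ 2 * d ^ 2) = a * -(4 * c ^ 3 + 27 * a * d ^ 2) := by
    ring
  rw [discrim'_depressedCubic a c d ha, hfactor]
  exact discrim'_eq_zero_of_X_sq_dvd
    (mul_ne_zero (right_ne_zero_of_mul ha) (neg_ne_zero.mpr hcd)) (dvd_mul_of_dvd_left hX _)

/-- For F(x,y) = x³y³ + x + 1 both double discriminants vanish,
Δ²_{y,x}(F) = Δ²_{x,y}(F) = 0, yet the complex curve {F = 0} has no singular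
point: F, F_x = 3x²y³ + 1 and F_y = 3x³y² have no common zero in ℂ². Hence the
converse of the double-discriminant singularity criterion fails. -/
theorem double_discriminant_converse_fails :
    discrim' (discrim'
      ((C ((X : Polynomial ℂ) ^ 3)) * (X : Polynomial (Polynomial ℂ)) ^ 3
        + C (X + 1))) = 0 ∧
    discrim' (discrim'
      ((C ((X : Polynomial ℂ) ^ 3)) * (X : Polynomial (Polynomial ℂ)) ^ 3
        + X + 1)) = 0 ∧
    ¬ ∃ x y : ℂ, x ^ 3 * y ^ 3 + x + 1 = 0 ∧ 3 * x ^ 2 * y ^ 3 + 1 = 0 ∧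
        3 * x ^ 3 * y ^ 2 = 0 := by
  have ha : (3 : ℂ[X]) * X ^ 3 ≠ 0 := by simp [X_ne_zero]
  have hX : (X : ℂ[X]) ^ 2 ∣ X ^ 3 := pow_dvd_pow X (by norm_num)
  refine ⟨?_, ?_, ?_⟩
  · rw [show C (X ^ 3) * X ^ 3 + C (X + 1) = C (X ^ 3) * X ^ 3 + C 0 * X + C ((X : ℂ[X]) + 1) by
      simp]
    refine discrim'_discrim'_depressedCubic_eq_zero_of_X_sq_dvd ha hX fun h ↦ ?_
    simpa using congrArg (eval 1) h
  · rw [show C (X ^ 3) * X ^ 3 + X + 1 = C (X ^ 3) * X ^ 3 + C 1 * X + C (1 : ℂ[X]) by simp]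
    refine discrim'_discrim'_depressedCubic_eq_zero_of_X_sq_dvd ha hX fun h ↦ ?_
    simpa using congrArg (eval 0) h
  · rintro ⟨x, y, hF, hFx, hFy⟩
    rcases mul_eq_zero.mp hFy with hx | hy
    · have hx : x = 0 := by simpa using hx
      simp [hx] at hF
    · have hy : y = 0 := by simpa using hy
      simp [hy] at hFx
end

section
/- Let P(x) be a real polynomial of degree n and α < β real numbers. Define the normalized polynomial N(x) = (x+1)ⁿ·P((βx + α)/(x + 1)). Then the map x ↦ (βx + α)/(x + 1) is a bijection from (0, ∞) onto (α, β), and the number of real roots of P in (α, β), counted with multiplicity, equals the number of real roots of N in (0, ∞), counted with multiplicity. -/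
/-! The roots of `normalizedVersion P α β` in `(0, ∞)` are the preimages of the roots of `P`
in `(α, β)` under the Möbius map `x ↦ (βx + α)/(x + 1)`, whose inverse is
`y ↦ (y - α)/(β - y)`. Multiplicities match because `normalizedVersion` is multiplicative and
sends the linear factor `X - r` to a nonzero multiple of `X - (r - α)/(β - r)`; so peeling off
the roots of `P` in `(α, β)` one at a time reduces to a polynomial without roots there. -/

open Polynomial

/-- The normalized version N(x) = (x+1)^{deg P} · P((βx+α)/(x+1)) of a real
polynomial P with respect to the interval (α, β), written as a polynomial. -/
noncomputable def normalizedVersion (P : Polynomial ℝ) (α β : ℝ) : Polynomial ℝ :=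
  ∑ i ∈ Finset.range (P.natDegree + 1),
    C (P.coeff i) * (C β * X + C α) ^ i * (X + 1) ^ (P.natDegree - i)

section Mobius

variable {α β : ℝ}

theorem mapsTo_mobius_Ioi_Ioo (hαβ : α < β) :
    Set.MapsTo (fun x : ℝ => (β * x + α) / (x + 1)) (Set.Ioi 0) (Set.Ioo α β) := by
  intro x (hx : 0 < x)
  have hx1 : 0 < x + 1 := by linarith
  constructor
  · rw [lt_div_iff₀ hx1]; nlinarith
  · rw [div_lt_iff₀ hx1]; nlinarith

theorem mapsTo_mobius_inv_Ioo_Ioi :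
    Set.MapsTo (fun y : ℝ => (y - α) / (β - y)) (Set.Ioo α β) (Set.Ioi 0) :=
  fun _ hy => div_pos (sub_pos.2 hy.1) (sub_pos.2 hy.2)

theorem invOn_mobius (hαβ : α < β) :
    Set.InvOn (fun y : ℝ => (y - α) / (β - y)) (fun x : ℝ => (β * x + α) / (x + 1))
      (Set.Ioi 0) (Set.Ioo α β) := by
  have hβα : β - α ≠ 0 := sub_ne_zero.2 hαβ.ne'
  constructor
  · intro x (hx : 0 < x)
    have hx1 : x + 1 ≠ 0 := by positivity
    have hden : β - (β * x + α) / (x + 1) = (β - α) / (x + 1) := by field_simp; ring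
    simp only [hden]
    field_simp
    ring
  · intro y hy
    have hβy : β - y ≠ 0 := sub_ne_zero.2 hy.2.ne'
    have hden : (y - α) / (β - y) + 1 = (β - α) / (β - y) := by field_simp; ring
    simp only [hden]
    field_simp
    ring

theorem bijOn_mobius_Ioi_Ioo (hαβ : α < β) :
    Set.BijOn (fun x : ℝ => (β * x + α) / (x + 1)) (Set.Ioi 0) (Set.Ioo α β) :=
  (invOn_mobius hαβ).bijOn (mapsTo_mobius_Ioi_Ioo hαβ) mapsTo_mobius_inv_Ioo_Ioi

end Mobius

section NormalizedVersion

variable (α β : ℝ)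

theorem eval_normalizedVersion (P : ℝ[X]) {x : ℝ} (hx : x + 1 ≠ 0) :
    (normalizedVersion P α β).eval x
      = (x + 1) ^ P.natDegree * P.eval ((β * x + α) / (x + 1)) := by
  rw [normalizedVersion, eval_finsetSum, P.eval_eq_sum_range, Finset.mul_sum]
  refine Finset.sum_congr rfl fun i hi => ?_
  rw [Finset.mem_range, Nat.lt_succ_iff] at hi
  simp only [eval_mul, eval_pow, eval_C, eval_add, eval_X, eval_one, div_pow]
  rw [← pow_sub_mul_pow (x + 1) hi]
  field_simp

theorem eval_neg_one_normalizedVersion (P : ℝ[X]) :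
    (normalizedVersion P α β).eval (-1) = P.leadingCoeff * (α - β) ^ P.natDegree := by
  rw [normalizedVersion, eval_finsetSum, Finset.sum_eq_single P.natDegree]
  · simp only [Nat.sub_self, pow_zero, mul_one, eval_mul, eval_pow, eval_add, eval_C, eval_X,
      leadingCoeff]
    ring
  · intro i hi hne
    rw [Finset.mem_range, Nat.lt_succ_iff] at hi
    simp [zero_pow (Nat.sub_ne_zero_of_lt (lt_of_le_of_ne hi hne))]
  · simp

@[simp]
theorem normalizedVersion_zero : normalizedVersion 0 α β = 0 := by
  simp [normalizedVersion]

variable {α β}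

theorem normalizedVersion_ne_zero {P : ℝ[X]} (hP : P ≠ 0) (hαβ : α ≠ β) :
    normalizedVersion P α β ≠ 0 := by
  intro h
  have h' := eval_neg_one_normalizedVersion α β P
  rw [h, eval_zero] at h'
  exact mul_ne_zero (leadingCoeff_ne_zero.2 hP) (pow_ne_zero _ (sub_ne_zero.2 hαβ)) h'.symm

theorem normalizedVersion_mul {P Q : ℝ[X]} (hP : P ≠ 0) (hQ : Q ≠ 0) :
    normalizedVersion (P * Q) α β = normalizedVersion P α β * normalizedVersion Q α β := by
  refine eq_of_infinite_eval_eq _ _ <|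
    (Set.finite_singleton (-1)).infinite_compl.mono fun x (hx : x ≠ -1) => ?_
  have hx1 : x + 1 ≠ 0 := fun h => hx (eq_neg_of_add_eq_zero_left h)
  simp only [Set.mem_ofPred_eq, eval_mul, eval_normalizedVersion _ _ _ hx1,
    natDegree_mul hP hQ, pow_add]
  ring

theorem normalizedVersion_X_sub_C {r : ℝ} (hr : r ≠ β) :
    normalizedVersion (X - C r) α β = C (β - r) * (X - C ((r - α) / (β - r))) := by
  have hC : (C β - C r) * C ((r - α) / (β - r)) = C r - C α := by
    rw [← C_sub, ← C_mul, mul_div_cancel₀ _ (sub_ne_zero.2 hr.symm), C_sub]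
  rw [normalizedVersion, natDegree_X_sub_C]
  simp only [Nat.reduceAdd, coeff_sub, coeff_X, coeff_C, map_sub,
    MonoidWithZeroHom.map_ite_one_zero, Finset.sum_range_succ, Finset.range_one,
    Finset.sum_singleton, one_ne_zero, ↓reduceIte, zero_sub, pow_zero, mul_one, tsub_zero,
    pow_one, neg_mul, map_zero, sub_zero, one_mul, tsub_self]
  linear_combination hC

theorem roots_normalizedVersion_mul {P Q : ℝ[X]} (hP : P ≠ 0) (hQ : Q ≠ 0)
    (hαβ : α ≠ β) :
    (normalizedVersion (P * Q) α β).roots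
      = (normalizedVersion P α β).roots + (normalizedVersion Q α β).roots := by
  rw [normalizedVersion_mul hP hQ, roots_mul <|
    mul_ne_zero (normalizedVersion_ne_zero hP hαβ) (normalizedVersion_ne_zero hQ hαβ)]

theorem mem_roots_normalizedVersion_iff {P : ℝ[X]} (hP : P ≠ 0) (hαβ : α ≠ β) {x : ℝ}
    (hx : x + 1 ≠ 0) :
    x ∈ (normalizedVersion P α β).roots ↔ (β * x + α) / (x + 1) ∈ P.roots := by
  rw [mem_roots (normalizedVersion_ne_zero hP hαβ), mem_roots hP, IsRoot.def, IsRoot.def,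
    eval_normalizedVersion _ _ _ hx, mul_eq_zero, or_iff_right (pow_ne_zero _ hx)]

end NormalizedVersion

section RootCount

open Classical

variable {α β : ℝ}

theorem roots_filter_Ioi_normalizedVersion_eq_zero (hαβ : α < β) {P : ℝ[X]}
    (h : ∀ r ∈ P.roots, r ∉ Set.Ioo α β) :
    (normalizedVersion P α β).roots.filter (fun x => x ∈ Set.Ioi 0) = 0 := by
  rcases eq_or_ne P 0 with rfl | hP
  · simp
  refine Multiset.filter_eq_nil.2 fun x hx (hx0 : 0 < x) =>
    h _ ?_ (mapsTo_mobius_Ioi_Ioo hαβ hx0)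
  exact (mem_roots_normalizedVersion_iff hP hαβ.ne (by positivity)).1 hx

theorem roots_filter_Ioi_normalizedVersion_X_sub_C {r : ℝ} (hr : r ∈ Set.Ioo α β) :
    (normalizedVersion (X - C r) α β).roots.filter (fun x => x ∈ Set.Ioi 0)
      = {(r - α) / (β - r)} := by
  rw [normalizedVersion_X_sub_C hr.2.ne, roots_C_mul _ (sub_ne_zero.2 hr.2.ne'),
    roots_X_sub_C, Multiset.filter_singleton, if_pos (mapsTo_mobius_inv_Ioo_Ioi hr)]

theorem card_roots_filter_Ioo_eq_card_roots_filter_Ioi_normalizedVersion (hαβ : α < β)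
    (P : ℝ[X]) :
    Multiset.card (P.roots.filter fun r => r ∈ Set.Ioo α β)
      = Multiset.card ((normalizedVersion P α β).roots.filter fun r => r ∈ Set.Ioi 0) := by
  induction hn : P.natDegree using Nat.strong_induction_on generalizing P with
  | _ n ih =>
  rcases eq_or_ne P 0 with rfl | hP
  · simp
  by_cases hex : ∃ r ∈ P.roots, r ∈ Set.Ioo α β
  · obtain ⟨r, hr, hrI⟩ := hex
    set Q := P /ₘ (X - C r)
    have hPQ : (X - C r) * Q = P := mul_divByMonic_eq_iff_isRoot.2 (isRoot_of_mem_roots hr)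
    have hQ : Q ≠ 0 := right_ne_zero_of_mul (hPQ ▸ hP)
    have hdeg : Q.natDegree < n := by
      rw [← hn, ← hPQ, natDegree_mul (X_sub_C_ne_zero r) hQ, natDegree_X_sub_C]
      omega
    rw [← hPQ, roots_mul (hPQ ▸ hP),
      roots_normalizedVersion_mul (X_sub_C_ne_zero r) hQ hαβ.ne, Multiset.filter_add,
      Multiset.filter_add, Multiset.card_add, Multiset.card_add,
      roots_X_sub_C, Multiset.filter_singleton, if_pos hrI,
      roots_filter_Ioi_normalizedVersion_X_sub_C hrI, ih _ hdeg Q rfl, Multiset.card_singleton,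
      Multiset.card_singleton]
  · push Not at hex
    rw [Multiset.filter_eq_nil.2 hex, roots_filter_Ioi_normalizedVersion_eq_zero hαβ hex]

end RootCount

open Classical in
/-- x ↦ (βx+α)/(x+1) is a bijection from (0,∞) onto (α,β), the normalized
polynomial agrees with (x+1)^{deg P}·P((βx+α)/(x+1)), and the number of roots
of P in (α,β), with multiplicity, equals the number of roots of the normalized
polynomial in (0,∞), with multiplicity. -/
theorem normalized_root_count (P : Polynomial ℝ) (α β : ℝ) (hαβ : α < β) :
    Set.BijOn (fun x : ℝ => (β * x + α) / (x + 1)) (Set.Ioi 0) (Set.Ioo α β) ∧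
    (∀ x : ℝ, x ≠ -1 →
      (normalizedVersion P α β).eval x
        = (x + 1) ^ P.natDegree * P.eval ((β * x + α) / (x + 1))) ∧
    Multiset.card (P.roots.filter fun r => r ∈ Set.Ioo α β)
      = Multiset.card ((normalizedVersion P α β).roots.filter fun r => r ∈ Set.Ioi 0) :=
  ⟨bijOn_mobius_Ioi_Ioo hαβ,
    fun _ hx => eval_normalizedVersion α β P fun h => hx (eq_neg_of_add_eq_zero_left h),
    card_roots_filter_Ioo_eq_card_roots_filter_Ioi_normalizedVersion hαβ P⟩
end

section
/- For 0 < b < √(2/3), the function (φ₁ - φ₃)(x), where φ₁(x) = -1/x and φ₃(x) = (x² - 5bx + 13b²)/(9b³(x - b)²), has exactly one zero x₀ in (-∞, 0), and this zero satisfies -2b < x₀ < 0. -/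
/-!
Over the common denominator `9 b³ x (x - b)²`, which does not vanish for `x < 0`, the
function `φ₁ - φ₃` has the cubic numerator `N = phiDiffNum b`. The derivative of `N` has discriminant
`b² (81 b⁴ - 36 b² - 14)`, negative when `b² < 2/3`, so `N` is strictly decreasing on all of `ℝ`.
Since `N (-2b) = 27 b³ (2 - 3 b²) > 0 > -9 b⁵ = N 0`, the zero of `N` is unique and lies in
`(-2b, 0)`.
-/

def phiDiffNum (b x : ℝ) : ℝ :=
  -x ^ 3 + (5 * b - 9 * b ^ 3) * x ^ 2 + (18 * b ^ 4 - 13 * b ^ 2) * x - 9 * b ^ 5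

lemma phiDiff_eq_phiDiffNum_div {b x : ℝ} (hb : b ≠ 0) (hx : x ≠ 0) (hxb : x - b ≠ 0) :
    -1 / x - (x ^ 2 - 5 * b * x + 13 * b ^ 2) / (9 * b ^ 3 * (x - b) ^ 2)
      = phiDiffNum b x / (9 * b ^ 3 * x * (x - b) ^ 2) := by
  unfold phiDiffNum
  field_simp
  ring

lemma phiDiff_eq_zero_iff {b x : ℝ} (hb : 0 < b) (hx : x < 0) :
    -1 / x - (x ^ 2 - 5 * b * x + 13 * b ^ 2) / (9 * b ^ 3 * (x - b) ^ 2) = 0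
      ↔ phiDiffNum b x = 0 := by
  have hxb : x - b ≠ 0 := by linarith
  have hden : 9 * b ^ 3 * x * (x - b) ^ 2 ≠ 0 := by
    have := hx.ne
    positivity
  rw [phiDiff_eq_phiDiffNum_div hb.ne' hx.ne hxb, div_eq_zero_iff, or_iff_left hden]

lemma phiDiffNum_strictAnti {b : ℝ} (hb : 0 < b) (hb2 : b ^ 2 < 2 / 3) :
    StrictAnti (phiDiffNum b) := by
  intro x y hxy
  set c := 5 * b - 9 * b ^ 3
  set d := 18 * b ^ 4 - 13 * b ^ 2
  -- `N x - N y = (y - x) Q(x, y)`, and `Q ≥ -(c² + 3d)/3 = -b² (81 b⁴ - 36 b² - 14)/3 > 0`.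
  have hQ : 0 < x ^ 2 + x * y + y ^ 2 - c * (x + y) - d := by
    nlinarith [sq_nonneg (3 * (x + y) - 2 * c), sq_nonneg (x - y), mul_pos hb hb,
      mul_pos (mul_pos hb hb) (mul_pos hb hb)]
  have hfactor : phiDiffNum b x - phiDiffNum b y
      = (y - x) * (x ^ 2 + x * y + y ^ 2 - c * (x + y) - d) := by
    unfold phiDiffNum
    ring
  nlinarith [mul_pos (sub_pos.mpr hxy) hQ]

lemma continuous_phiDiffNum (b : ℝ) : Continuous (phiDiffNum b) := by
  unfold phiDiffNum
  fun_prop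

lemma phiDiffNum_zero (b : ℝ) : phiDiffNum b 0 = -9 * b ^ 5 := by
  unfold phiDiffNum
  ring

lemma phiDiffNum_neg_two_mul (b : ℝ) : phiDiffNum b (-2 * b) = 27 * b ^ 3 * (2 - 3 * b ^ 2) := by
  unfold phiDiffNum
  ring

/-- For 0 < b < √(2/3), the function (φ₁ - φ₃)(x) with φ₁(x) = -1/x and
φ₃(x) = (x² - 5bx + 13b²)/(9b³(x-b)²) has exactly one zero x₀ in (-∞, 0), and
-2b < x₀ < 0. -/
theorem unique_negative_zero (b : ℝ) (hb0 : 0 < b) (hb : b < Real.sqrt (2 / 3)) :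
    ∃ x₀ : ℝ, x₀ < 0 ∧
      (-1 / x₀ - (x₀ ^ 2 - 5 * b * x₀ + 13 * b ^ 2) / (9 * b ^ 3 * (x₀ - b) ^ 2) = 0) ∧
      (-2 * b < x₀) ∧
      (∀ x : ℝ, x < 0 →
        -1 / x - (x ^ 2 - 5 * b * x + 13 * b ^ 2) / (9 * b ^ 3 * (x - b) ^ 2) = 0 →
        x = x₀) := by
  have hb2 : b ^ 2 < 2 / 3 := (Real.lt_sqrt hb0.le).mp hb
  have hN0 : phiDiffNum b 0 < 0 := by
    rw [phiDiffNum_zero]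
    have := pow_pos hb0 5
    linarith
  have hN2b : 0 < phiDiffNum b (-2 * b) := by
    rw [phiDiffNum_neg_two_mul]
    exact mul_pos (by positivity) (by linarith)
  obtain ⟨x₀, ⟨hx₀_gt, hx₀_neg⟩, hNx₀⟩ := intermediate_value_Ioo' (by linarith)
    (continuous_phiDiffNum b).continuousOn ⟨hN0, hN2b⟩
  refine ⟨x₀, hx₀_neg, (phiDiff_eq_zero_iff hb0 hx₀_neg).mpr hNx₀, hx₀_gt, fun x hx hfx => ?_⟩
  exact (phiDiffNum_strictAnti hb0 hb2).injective
    (((phiDiff_eq_zero_iff hb0 hx).mp hfx).trans hNx₀.symm)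
end
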